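/- arXiv:1605.04003 — 3 statements merged into one kernel-verified Lean document; each statement's English description precedes it below -/
import Mathlib

section
/- If β/δ ≥ (1/4)(1 + π/4), then the function F(z) = 1 - 2βz + (δ/2)[z²/(z²+1) + z·arctan(z)] is strictly monotonically decreasing on [0,∞), tends to -∞ as z → ∞, and has precisely one zero in (0,∞). -/
/-!
Write `F z = 1 - 2βz + (δ/2) φ z` with `φ z = z²/(z²+1) + z arctan z`. Since
`φ'' z = 4(1 - z²)/(z²+1)³`, on `[0, ∞)` the slope `φ'` is maximal exactly at `z = 1`, where it
equals `1 + π/4`. The ratio condition is `(δ/2)(1 + π/4) ≤ 2β`, so `F' < 0` on `[0, ∞)` away from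
`z = 1`, and `F` is strictly decreasing. As `φ z ≤ 1 + πz/2`, `F` lies below a line of slope
`δπ/4 - 2β < 0` (because `π < 4`), so `F → -∞`; since `F 0 = 1`, the intermediate value theorem
gives a positive zero, unique by strict monotonicity.
-/

open Real Set Filter

theorem strictAntiOn_of_deriv_neg_of_ne {D : Set ℝ} (hD : Convex ℝ D) {f : ℝ → ℝ} {c : ℝ}
    (hf : ContinuousOn f D) (hf' : ∀ x ∈ interior D, x ≠ c → deriv f x < 0) :
    StrictAntiOn f D := by
  by_cases hc : c ∈ D
  · rw [← inter_univ D, ← Iic_union_Ici (a := c), inter_union_distrib_left]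
    refine StrictAntiOn.union ?_ ?_ ⟨⟨hc, self_mem_Iic⟩, fun x hx => hx.2⟩
      ⟨⟨hc, self_mem_Ici⟩, fun x hx => hx.2⟩
    · refine strictAntiOn_of_deriv_neg (hD.inter (convex_Iic c)) (hf.mono inter_subset_left)
        fun x hx => ?_
      rw [interior_inter, interior_Iic] at hx
      exact hf' x hx.1 hx.2.ne
    · refine strictAntiOn_of_deriv_neg (hD.inter (convex_Ici c)) (hf.mono inter_subset_left)
        fun x hx => ?_
      rw [interior_inter, interior_Ici] at hx
      exact hf' x hx.1 hx.2.ne'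
  · exact strictAntiOn_of_deriv_neg hD hf fun x hx =>
      hf' x hx (ne_of_mem_of_not_mem (interior_subset hx) hc)

theorem existsUnique_mem_Ioi_eq_of_strictAntiOn_Ici {f : ℝ → ℝ} {a y : ℝ}
    (hf : ContinuousOn f (Ici a)) (hanti : StrictAntiOn f (Ici a)) (ha : y < f a)
    (hlim : Tendsto f atTop atBot) : ∃! z, z ∈ Ioi a ∧ f z = y := by
  obtain ⟨b, hb, hab⟩ :=
    ((hlim.eventually (eventually_lt_atBot y)).and (eventually_gt_atTop a)).exists
  obtain ⟨z, hz, hfz⟩ := intermediate_value_Ioo' hab.le (hf.mono Icc_subset_Ici_self) ⟨hb, ha⟩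
  exact ⟨z, ⟨hz.1, hfz⟩, fun w hw =>
    hanti.injOn (mem_Ici_of_Ioi hw.1) (mem_Ici_of_Ioi hz.1) (hw.2.trans hfz.symm)⟩

noncomputable def phi (z : ℝ) : ℝ := z ^ 2 / (z ^ 2 + 1) + z * arctan z

noncomputable def phiDeriv (z : ℝ) : ℝ := (3 * z + z ^ 3) / (z ^ 2 + 1) ^ 2 + arctan z

theorem hasDerivAt_phi (z : ℝ) : HasDerivAt phi (phiDeriv z) z := by
  have h := ((hasDerivAt_pow 2 z).div ((hasDerivAt_pow 2 z).add_const 1) (by positivity)).add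
    ((hasDerivAt_id' z).mul (hasDerivAt_arctan z))
  refine h.congr_deriv ?_
  simp only [phiDeriv]
  field_simp
  ring

theorem hasDerivAt_phiDeriv (z : ℝ) :
    HasDerivAt phiDeriv (4 * (1 - z ^ 2) / (z ^ 2 + 1) ^ 3) z := by
  have h := ((((hasDerivAt_id' z).const_mul 3).add (hasDerivAt_pow 3 z)).div
    (((hasDerivAt_pow 2 z).add_const 1).fun_pow 2) (by positivity)).add (hasDerivAt_arctan z)
  refine h.congr_deriv ?_
  simp only [Pi.add_apply]
  field_simp
  ring

theorem phiDeriv_one : phiDeriv 1 = 1 + π / 4 := by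
  norm_num [phiDeriv, arctan_one]

theorem strictMonoOn_phiDeriv : StrictMonoOn phiDeriv (Icc (-1) 1) := by
  refine strictMonoOn_of_deriv_pos (convex_Icc _ _)
    (fun z _ => (hasDerivAt_phiDeriv z).continuousAt.continuousWithinAt) fun z hz => ?_
  rw [interior_Icc] at hz
  rw [(hasDerivAt_phiDeriv z).deriv]
  have : z ^ 2 < 1 := by nlinarith [hz.1, hz.2]
  exact div_pos (by linarith) (by positivity)

theorem strictAntiOn_phiDeriv : StrictAntiOn phiDeriv (Ici 1) := by
  refine strictAntiOn_of_deriv_neg (convex_Ici _)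
    (fun z _ => (hasDerivAt_phiDeriv z).continuousAt.continuousWithinAt) fun z hz => ?_
  rw [interior_Ici] at hz
  rw [(hasDerivAt_phiDeriv z).deriv]
  have : 1 < z ^ 2 := by nlinarith [mem_Ioi.1 hz]
  exact div_neg_of_neg_of_pos (by linarith) (by positivity)

theorem phiDeriv_lt_of_ne_one {z : ℝ} (hz : -1 ≤ z) (h1 : z ≠ 1) : phiDeriv z < 1 + π / 4 := by
  rw [← phiDeriv_one]
  rcases h1.lt_or_gt with h | h
  · exact strictMonoOn_phiDeriv ⟨hz, h.le⟩ ⟨by norm_num, le_rfl⟩ h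
  · exact strictAntiOn_phiDeriv self_mem_Ici h.le h

theorem phi_le {z : ℝ} (hz : 0 ≤ z) : phi z ≤ 1 + π / 2 * z := by
  have hfrac : z ^ 2 / (z ^ 2 + 1) ≤ 1 := by
    rw [div_le_one (by positivity)]
    linarith
  have harctan : z * arctan z ≤ z * (π / 2) :=
    mul_le_mul_of_nonneg_left (arctan_lt_pi_div_two z).le hz
  simp only [phi]
  linarith

theorem stmt_2_general (β δ : ℝ) (hδ : 0 < δ)
    (hratio : β/δ ≥ (1/4) * (1 + Real.pi/4))
    (F : ℝ → ℝ)
    (hF : ∀ z, F z = 1 - 2*β*z + (δ/2) * (z^2/(z^2+1) + z * Real.arctan z)) :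
    StrictAntiOn F (Set.Ici (0:ℝ)) ∧
    Tendsto F atTop atBot ∧
    (∃! z : ℝ, z ∈ Set.Ioi (0:ℝ) ∧ F z = 0) := by
  have hFphi : F = fun z => 1 - 2 * β * z + δ / 2 * phi z := funext hF
  have hderiv (z : ℝ) : HasDerivAt F (-(2 * β) + δ / 2 * phiDeriv z) z := by
    rw [hFphi]
    exact ((((hasDerivAt_id' z).const_mul (2 * β)).const_sub 1).add
      ((hasDerivAt_phi z).const_mul (δ / 2))).congr_deriv (by ring)
  have hcont : Continuous F := continuous_iff_continuousAt.2 fun z => (hderiv z).continuousAt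
  have hslope : δ / 2 * (1 + π / 4) ≤ 2 * β := by
    have := (le_div_iff₀ hδ).1 hratio
    linarith
  have hanti : StrictAntiOn F (Ici 0) := by
    refine strictAntiOn_of_deriv_neg_of_ne (c := 1) (convex_Ici 0) hcont.continuousOn
      fun z hz h1 => ?_
    rw [interior_Ici] at hz
    have := phiDeriv_lt_of_ne_one (by linarith [mem_Ioi.1 hz]) h1
    rw [(hderiv z).deriv]
    nlinarith
  have hlim : Tendsto F atTop atBot := by
    have hneg : δ * π / 4 - 2 * β < 0 := by nlinarith [pi_lt_four]
    refine tendsto_atBot_mono' atTop ?_ (tendsto_atBot_add_const_left _ (1 + δ / 2)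
      ((tendsto_const_mul_atBot_of_neg hneg).2 tendsto_id))
    filter_upwards [eventually_ge_atTop 0] with z hz
    rw [hFphi, id]
    nlinarith [phi_le hz]
  exact ⟨hanti, hlim,
    existsUnique_mem_Ioi_eq_of_strictAntiOn_Ici hcont.continuousOn hanti (by simp [hF]) hlim⟩

/-- if β/δ ≥ (1/4)(1+π/4) then F is strictly decreasing on [0,∞),
tends to -∞ at ∞, and has exactly one zero in (0,∞). -/
theorem stmt_2 (β δ : ℝ) (hβ : 0 < β) (hδ : 0 < δ)
    (hratio : β/δ ≥ (1/4) * (1 + Real.pi/4))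
    (F : ℝ → ℝ)
    (hF : ∀ z, F z = 1 - 2*β*z + (δ/2) * (z^2/(z^2+1) + z * Real.arctan z)) :
    StrictAntiOn F (Set.Ici (0:ℝ)) ∧
    Tendsto F atTop atBot ∧
    (∃! z : ℝ, z ∈ Set.Ioi (0:ℝ) ∧ F z = 0) :=
  stmt_2_general β δ hδ hratio F hF
end

section
/- If β/δ < π/8, then F'(z) > 0 for all z > 1, where F(z) = 1 - 2βz + (δ/2)[z²/(z²+1) + z·arctan(z)]; in particular F is strictly increasing on (1,∞) and F(z) → +∞ as z → ∞. -/
open Real Set Filter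

lemma arctan_lt_self' {x : ℝ} (hx : 0 < x) : Real.arctan x < x := by
  have h1 : 0 < Real.arctan x := by
    have := Real.arctan_strictMono hx
    rwa [Real.arctan_zero] at this
  have h2 : Real.arctan x < Real.pi / 2 := Real.arctan_lt_pi_div_two x
  have := Real.lt_tan h1 h2
  rwa [Real.tan_arctan] at this

lemma hasDerivAt_F (β δ z : ℝ) :
    HasDerivAt (fun z : ℝ => 1 - 2*β*z + (δ/2) * (z^2/(z^2+1) + z * Real.arctan z))
      (-(2*β) + (δ/2) * ((2*z*(z^2+1) - z^2*(2*z))/(z^2+1)^2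
        + (1 * Real.arctan z + z * (1/(1+z^2))))) z := by
  have hz : (z:ℝ)^2 + 1 ≠ 0 := by positivity
  have h1 : HasDerivAt (fun z : ℝ => z^2) (2*z) z := by
    simpa using hasDerivAt_pow 2 z
  have h2 : HasDerivAt (fun z : ℝ => z^2 + 1) (2*z) z := h1.add_const 1
  have hdiv : HasDerivAt (fun z : ℝ => z^2/(z^2+1))
      ((2*z*(z^2+1) - z^2*(2*z))/(z^2+1)^2) z := h1.div h2 hz
  have hmul : HasDerivAt (fun z : ℝ => z * Real.arctan z)
      (1 * Real.arctan z + z * (1/(1+z^2))) z :=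
    (hasDerivAt_id z).mul (Real.hasDerivAt_arctan z)
  have hlin : HasDerivAt (fun z : ℝ => 1 - 2*β*z) (-(2*β)) z := by
    simpa using ((hasDerivAt_id z).const_mul (2*β)).const_sub 1
  exact hlin.add (((hdiv.add hmul)).const_mul (δ/2))

/-- if β/δ < π/8 then F'(z) > 0 for all z > 1; in particular F is
strictly increasing on (1,∞) and tends to +∞ at ∞. -/
theorem stmt_3 (β δ : ℝ) (hβ : 0 < β) (hδ : 0 < δ)
    (hratio : β/δ < Real.pi/8)
    (F : ℝ → ℝ)
    (hF : ∀ z, F z = 1 - 2*β*z + (δ/2) * (z^2/(z^2+1) + z * Real.arctan z)) :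
    (∀ z > 1, deriv F z > 0) ∧
    StrictMonoOn F (Set.Ioi (1:ℝ)) ∧
    Tendsto F atTop atTop := by
  have hFe : F = fun z : ℝ => 1 - 2*β*z + (δ/2) * (z^2/(z^2+1) + z * Real.arctan z) :=
    funext hF
  have hβδ : β < δ * Real.pi / 8 := by
    rw [div_lt_div_iff₀ hδ (by norm_num : (0:ℝ) < 8)] at hratio
    linarith
  have hd : ∀ z : ℝ, HasDerivAt F
      (-(2*β) + (δ/2) * ((2*z*(z^2+1) - z^2*(2*z))/(z^2+1)^2
        + (1 * Real.arctan z + z * (1/(1+z^2))))) z := by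
    intro z; rw [hFe]; exact hasDerivAt_F β δ z
  -- key positivity of derivative
  have hpos : ∀ z > 1, deriv F z > 0 := by
    intro z hz
    rw [(hd z).deriv]
    have hz0 : (0:ℝ) < z := by linarith
    have hzne : z ≠ 0 := ne_of_gt hz0
    -- arctan z = π/2 - arctan (1/z)
    have hinv : Real.arctan z⁻¹ = Real.pi/2 - Real.arctan z :=
      Real.arctan_inv_of_pos hz0
    have hltself : Real.arctan z⁻¹ < z⁻¹ := arctan_lt_self' (by positivity)
    -- A := 2z/(z²+1)² + z/(1+z²) ≥ 1/z
    have hA : z⁻¹ < (2*z*(z^2+1) - z^2*(2*z))/(z^2+1)^2 + z * (1/(1+z^2)) := by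
      have key : (2*z*(z^2+1) - z^2*(2*z))/(z^2+1)^2 + z * (1/(1+z^2)) - z⁻¹
          = (z^2-1)/(z*(z^2+1)^2) := by
        field_simp
        ring
      have hpos2 : (0:ℝ) < (z^2-1)/(z*(z^2+1)^2) :=
        div_pos (by nlinarith) (by positivity)
      linarith
    have hS : Real.pi/2 < (2*z*(z^2+1) - z^2*(2*z))/(z^2+1)^2
        + (1 * Real.arctan z + z * (1/(1+z^2))) := by
      have : Real.arctan z⁻¹ < (2*z*(z^2+1) - z^2*(2*z))/(z^2+1)^2 + z * (1/(1+z^2)) :=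
        lt_trans hltself hA
      rw [hinv] at this
      linarith
    have hpi : 0 < Real.pi := Real.pi_pos
    nlinarith [mul_lt_mul_of_pos_left hS (show (0:ℝ) < δ/2 by positivity)]
  refine ⟨hpos, ?_, ?_⟩
  · apply strictMonoOn_of_deriv_pos (convex_Ioi 1)
    · exact fun z _ => ((hd z).differentiableAt.continuousAt).continuousWithinAt
    · intro z hz
      rw [interior_Ioi] at hz
      exact hpos z hz
  · -- tendsto atTop
    have hc : 0 < δ * Real.pi / 8 - β := by linarith
    obtain ⟨θ, hθ⟩ : ∃ θ : ℝ, θ = 2*β/δ + Real.pi/4 := ⟨_, rfl⟩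
    have hθ1 : θ < Real.pi/2 := by
      have h : 2*β/δ < Real.pi/4 := by
        rw [div_lt_iff₀ hδ] at hratio ⊢
        linarith
      rw [hθ]; linarith
    have hθ0 : 0 < θ := by rw [hθ]; positivity
    have hθ2 : -(Real.pi/2) < θ := by linarith [Real.pi_pos]
    have harctan : ∀ z : ℝ, Real.tan θ ≤ z → θ ≤ Real.arctan z := by
      intro z hz
      have := Real.arctan_tan (x := θ) hθ2 hθ1
      calc θ = Real.arctan (Real.tan θ) := this.symm
        _ ≤ Real.arctan z := Real.arctan_strictMono.monotone hz
    have hev : ∀ᶠ z in atTop, 1 + (δ * Real.pi / 8 - β) * z ≤ F z := by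
      filter_upwards [eventually_ge_atTop (Real.tan θ), eventually_ge_atTop (1:ℝ)]
        with z hz1 hz2
      rw [hF z]
      have h1 : θ ≤ Real.arctan z := harctan z hz1
      have h2 : (0:ℝ) ≤ z^2/(z^2+1) := by positivity
      have h3 : z * θ ≤ z * Real.arctan z :=
        mul_le_mul_of_nonneg_left h1 (by linarith)
      have h4 : z * θ = 2*β/δ*z + Real.pi/4*z := by rw [hθ]; ring
      have h5 : δ/2 * (2*β/δ*z) = β * z := by field_simp
      nlinarith [mul_le_mul_of_nonneg_left h3 (show (0:ℝ) ≤ δ/2 by positivity)]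
    exact tendsto_atTop_mono' atTop hev
      (tendsto_atTop_add_const_left _ 1 (tendsto_id.const_mul_atTop hc))
end

section
/- If π/8 < β/δ < (1/4)(1+π/4), then F(z) = 1 - 2βz + (δ/2)[z²/(z²+1) + z·arctan(z)] has a unique local minimum in (0,1) and a unique local maximum in (1,∞), and F(z) → -∞ as z → ∞. -/
/-!
Write `F z = 1 - 2βz + (δ/2) s(z)` with `s z = z²/(z²+1) + z arctan z`. Then
`s'' z = 4(1 - z²)/(z²+1)³`, so `F'` increases strictly on `[0, 1]` and decreases strictly
on `[1, ∞)`. The hypotheses on `β/δ` say exactly that `F' 1 > 0` and that `F'` tends to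
`-2β + πδ/4 < 0` at infinity; also `F' 0 = -2β < 0`. Hence `F'` has exactly one zero in
`(0, 1)` and one in `(1, ∞)`; the sign of `F''` makes the first a local minimum and the
second a local maximum, and `F z ≤ 1 + δ/2 - (2β - πδ/4) z` gives `F → -∞`.
-/

open Real Set Filter

noncomputable def shape (z : ℝ) : ℝ := z ^ 2 / (z ^ 2 + 1) + z * arctan z

noncomputable def shapeDeriv (z : ℝ) : ℝ := (3 * z + z ^ 3) / (z ^ 2 + 1) ^ 2 + arctan z

noncomputable def shapeDeriv2 (z : ℝ) : ℝ := 4 * (1 - z ^ 2) / (z ^ 2 + 1) ^ 3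

theorem hasDerivAt_shape (z : ℝ) : HasDerivAt shape (shapeDeriv z) z := by
  have hz : z ^ 2 + 1 ≠ 0 := by positivity
  have hsq : HasDerivAt (fun z : ℝ => z ^ 2) (2 * z) z := by simpa using hasDerivAt_pow 2 z
  refine ((hsq.div (hsq.add_const 1) hz).add
    ((hasDerivAt_id z).mul (hasDerivAt_arctan z))).congr_deriv ?_
  simp only [shapeDeriv, id_eq]
  field_simp
  ring

theorem hasDerivAt_shapeDeriv (z : ℝ) : HasDerivAt shapeDeriv (shapeDeriv2 z) z := by
  have hz : z ^ 2 + 1 ≠ 0 := by positivity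
  have hsq : HasDerivAt (fun z : ℝ => z ^ 2) (2 * z) z := by simpa using hasDerivAt_pow 2 z
  have hnum : HasDerivAt (fun z : ℝ => 3 * z + z ^ 3) (3 + 3 * z ^ 2) z :=
    (((hasDerivAt_id z).const_mul 3).add (hasDerivAt_pow 3 z)).congr_deriv (by simp)
  refine ((hnum.div ((hsq.add_const 1).fun_pow 2) (pow_ne_zero 2 hz)).add
    (hasDerivAt_arctan z)).congr_deriv ?_
  simp only [shapeDeriv2]
  field_simp
  ring

theorem deriv_shapeDeriv : deriv shapeDeriv = shapeDeriv2 :=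
  funext fun z => (hasDerivAt_shapeDeriv z).deriv

theorem continuous_shapeDeriv : Continuous shapeDeriv :=
  continuous_iff_continuousAt.2 fun z => (hasDerivAt_shapeDeriv z).continuousAt

theorem shapeDeriv2_pos {z : ℝ} (hz : |z| < 1) : 0 < shapeDeriv2 z := by
  have : z ^ 2 < 1 := by simpa using sq_lt_sq.2 (hz.trans_eq abs_one.symm)
  unfold shapeDeriv2
  apply div_pos
  · linarith
  · positivity

theorem shapeDeriv2_neg {z : ℝ} (hz : 1 < |z|) : shapeDeriv2 z < 0 := by
  have : 1 < z ^ 2 := by simpa using sq_lt_sq.2 (abs_one.trans_lt hz)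
  unfold shapeDeriv2
  apply div_neg_of_neg_of_pos
  · linarith
  · positivity

theorem strictMonoOn_shapeDeriv : StrictMonoOn shapeDeriv (Icc 0 1) := by
  refine strictMonoOn_of_deriv_pos (convex_Icc 0 1) continuous_shapeDeriv.continuousOn
    fun z hz => ?_
  rw [interior_Icc] at hz
  rw [deriv_shapeDeriv]
  exact shapeDeriv2_pos (abs_lt.2 ⟨by linarith [hz.1], hz.2⟩)

theorem strictAntiOn_shapeDeriv : StrictAntiOn shapeDeriv (Ici 1) := by
  refine strictAntiOn_of_deriv_neg (convex_Ici 1) continuous_shapeDeriv.continuousOn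
    fun z hz => ?_
  rw [interior_Ici] at hz
  rw [deriv_shapeDeriv]
  exact shapeDeriv2_neg (hz.out.trans_le (le_abs_self z))

theorem shapeDeriv_zero : shapeDeriv 0 = 0 := by simp [shapeDeriv]

theorem shapeDeriv_one : shapeDeriv 1 = 1 + π / 4 := by norm_num [shapeDeriv]

theorem shapeDeriv_lt {z : ℝ} (hz : 0 < z) : shapeDeriv z < 2 / z + π / 2 := by
  have hrat : (3 * z + z ^ 3) / (z ^ 2 + 1) ^ 2 ≤ 2 / z := by
    rw [div_le_div_iff₀ (by positivity) hz]
    nlinarith [sq_nonneg z, sq_nonneg (z ^ 2)]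
  exact add_lt_add_of_le_of_lt hrat (arctan_lt_pi_div_two z)

theorem exists_one_lt_shapeDeriv_lt {ε : ℝ} (hε : 0 < ε) :
    ∃ N > 1, shapeDeriv N < π / 2 + ε := by
  refine ⟨1 + 2 / ε, by linarith [div_pos two_pos hε], ?_⟩
  have hN : 2 / (1 + 2 / ε) < ε := by
    rw [div_lt_iff₀ (by positivity)]
    field_simp
    linarith
  linarith [shapeDeriv_lt (by positivity : 0 < 1 + 2 / ε)]

theorem shape_le {z : ℝ} (hz : 0 ≤ z) : shape z ≤ 1 + π / 2 * z := by
  have hfrac : z ^ 2 / (z ^ 2 + 1) ≤ 1 := by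
    rw [div_le_one (by positivity)]
    linarith
  have harc : z * arctan z ≤ π / 2 * z := by
    rw [mul_comm (π / 2)]
    exact mul_le_mul_of_nonneg_left (arctan_lt_pi_div_two z).le hz
  exact add_le_add hfrac harc

noncomputable def tiltedShape (A B C z : ℝ) : ℝ := A + B * z + C * shape z

section TiltedShape

variable {A B C : ℝ}

theorem hasDerivAt_tiltedShape (z : ℝ) :
    HasDerivAt (tiltedShape A B C) (B + C * shapeDeriv z) z :=
  ((((hasDerivAt_id z).const_mul B).const_add A).add
    ((hasDerivAt_shape z).const_mul C)).congr_deriv (by simp)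

theorem continuous_tiltedShape : Continuous (tiltedShape A B C) :=
  continuous_iff_continuousAt.2 fun z => (hasDerivAt_tiltedShape z).continuousAt

theorem deriv_tiltedShape : deriv (tiltedShape A B C) = fun z => B + C * shapeDeriv z :=
  funext fun z => (hasDerivAt_tiltedShape z).deriv

theorem deriv_deriv_tiltedShape (z : ℝ) :
    deriv (deriv (tiltedShape A B C)) z = C * shapeDeriv2 z := by
  rw [deriv_tiltedShape]
  simpa using ((hasDerivAt_shapeDeriv z).const_mul C).const_add B |>.deriv

theorem existsUnique_isLocalMin_tiltedShape (hC : 0 < C) (h0 : B < 0)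
    (h1 : 0 < B + C * (1 + π / 4)) :
    ∃! z, z ∈ Ioo 0 1 ∧ IsLocalMin (tiltedShape A B C) z := by
  have hmono : StrictMonoOn (fun z => B + C * shapeDeriv z) (Icc 0 1) :=
    fun x hx y hy hxy => by
      simpa using mul_lt_mul_of_pos_left (strictMonoOn_shapeDeriv hx hy hxy) hC
  obtain ⟨z, hz, hz0⟩ := intermediate_value_Ioo zero_le_one
    (continuous_const.add (continuous_const.mul continuous_shapeDeriv)).continuousOn
    (show (0 : ℝ) ∈ Ioo (B + C * shapeDeriv 0) (B + C * shapeDeriv 1) by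
      simpa [shapeDeriv_zero, shapeDeriv_one] using And.intro h0 h1)
  refine ⟨z, ⟨hz, ?_⟩, fun y ⟨hy, hmin⟩ => ?_⟩
  · refine isLocalMin_of_deriv_deriv_pos ?_ (by rw [deriv_tiltedShape]; exact hz0)
      continuous_tiltedShape.continuousAt
    rw [deriv_deriv_tiltedShape]
    exact mul_pos hC (shapeDeriv2_pos (abs_lt.2 ⟨by linarith [hz.1], hz.2⟩))
  · exact hmono.injOn (Ioo_subset_Icc_self hy) (Ioo_subset_Icc_self hz)
      ((hmin.hasDerivAt_eq_zero (hasDerivAt_tiltedShape y)).trans hz0.symm)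

theorem existsUnique_isLocalMax_tiltedShape (hC : 0 < C) (h1 : 0 < B + C * (1 + π / 4))
    (hinf : B + C * (π / 2) < 0) :
    ∃! z, z ∈ Ioi 1 ∧ IsLocalMax (tiltedShape A B C) z := by
  have hanti : StrictAntiOn (fun z => B + C * shapeDeriv z) (Ici 1) :=
    fun x hx y hy hxy => by
      simpa using mul_lt_mul_of_pos_left (strictAntiOn_shapeDeriv hx hy hxy) hC
  obtain ⟨N, hN1, hN⟩ := exists_one_lt_shapeDeriv_lt (neg_pos.2 hinf |> div_pos <| hC)
  have hNneg : B + C * shapeDeriv N < 0 := by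
    have := mul_lt_mul_of_pos_left hN hC
    rw [mul_add, mul_div_cancel₀ _ hC.ne'] at this
    linarith
  obtain ⟨z, hz, hz0⟩ := intermediate_value_Ioo' hN1.le
    (continuous_const.add (continuous_const.mul continuous_shapeDeriv)).continuousOn
    (show (0 : ℝ) ∈ Ioo (B + C * shapeDeriv N) (B + C * shapeDeriv 1) by
      simpa [shapeDeriv_one] using And.intro hNneg h1)
  refine ⟨z, ⟨hz.1, ?_⟩, fun y ⟨hy, hmax⟩ => ?_⟩
  · refine isLocalMax_of_deriv_deriv_neg ?_ (by rw [deriv_tiltedShape]; exact hz0)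
      continuous_tiltedShape.continuousAt
    rw [deriv_deriv_tiltedShape]
    exact mul_neg_of_pos_of_neg hC (shapeDeriv2_neg (hz.1.trans_le (le_abs_self z)))
  · exact hanti.injOn (Ioi_subset_Ici_self hy) (Ioi_subset_Ici_self hz.1)
      ((hmax.hasDerivAt_eq_zero (hasDerivAt_tiltedShape y)).trans hz0.symm)

theorem tendsto_tiltedShape_atBot (hC : 0 ≤ C) (hinf : B + C * (π / 2) < 0) :
    Tendsto (tiltedShape A B C) atTop atBot := by
  have hline : Tendsto (fun z => A + C + (B + C * (π / 2)) * z) atTop atBot :=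
    tendsto_atBot_add_const_left _ _ (tendsto_id.const_mul_atTop_of_neg hinf)
  refine tendsto_atBot_mono' atTop ?_ hline
  filter_upwards [eventually_ge_atTop 0] with z hz
  have := mul_le_mul_of_nonneg_left (shape_le hz) hC
  simp only [tiltedShape]
  linarith

end TiltedShape

theorem stmt_4_general (β δ : ℝ) (hδ : 0 < δ)
    (hlo : Real.pi/8 < β/δ) (hhi : β/δ < (1/4) * (1 + Real.pi/4))
    (F : ℝ → ℝ)
    (hF : ∀ z, F z = 1 - 2*β*z + (δ/2) * (z^2/(z^2+1) + z * Real.arctan z)) :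
    (∃! z : ℝ, z ∈ Set.Ioo (0:ℝ) 1 ∧ IsLocalMin F z) ∧
    (∃! z : ℝ, z ∈ Set.Ioi (1:ℝ) ∧ IsLocalMax F z) ∧
    Tendsto F atTop atBot := by
  obtain rfl : F = tiltedShape 1 (-(2 * β)) (δ / 2) :=
    funext fun z => by rw [hF]; simp only [tiltedShape, shape]; ring
  have hC : 0 < δ / 2 := half_pos hδ
  have hinf : -(2 * β) + δ / 2 * (π / 2) < 0 := by
    rw [lt_div_iff₀ hδ] at hlo
    linarith
  have h1 : 0 < -(2 * β) + δ / 2 * (1 + π / 4) := by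
    rw [div_lt_iff₀ hδ] at hhi
    linarith
  exact ⟨existsUnique_isLocalMin_tiltedShape hC (by nlinarith [pi_pos]) h1,
    existsUnique_isLocalMax_tiltedShape hC h1 hinf, tendsto_tiltedShape_atBot hC.le hinf⟩

/-- if π/8 < β/δ < (1/4)(1+π/4) then F has a unique local minimum
in (0,1), a unique local maximum in (1,∞), and F(z) → -∞ as z → ∞. -/
theorem stmt_4 (β δ : ℝ) (hβ : 0 < β) (hδ : 0 < δ)
    (hlo : Real.pi/8 < β/δ) (hhi : β/δ < (1/4) * (1 + Real.pi/4))
    (F : ℝ → ℝ)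
    (hF : ∀ z, F z = 1 - 2*β*z + (δ/2) * (z^2/(z^2+1) + z * Real.arctan z)) :
    (∃! z : ℝ, z ∈ Set.Ioo (0:ℝ) 1 ∧ IsLocalMin F z) ∧
    (∃! z : ℝ, z ∈ Set.Ioi (1:ℝ) ∧ IsLocalMax F z) ∧
    Tendsto F atTop atBot :=
  stmt_4_general β δ hδ hlo hhi F hF
end
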